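/- Let G be a finite simple connected graph containing a W_a-configuration or a W_{a,b}-configuration H with centre v and connectors x and y, and let G' = G − (V(H) \ {x, y}). If G' has a G'-good spanning tree, then G has a G-good spanning tree. -/

import Mathlib

open SimpleGraph

/-- The degree of a vertex `v` in a simple graph `H`. -/
noncomputable def gdeg {V : Type} (H : SimpleGraph V) (v : V) : ℕ :=
  Nat.card (H.neighborSet v)

/-- The vertex set of a `W_a`-configuration with path `p`, centre `v` and connectors `x, y`. -/
def waVerts {V : Type} {n : ℕ} (p : Fin (n + 1) → V) (v x y : V) : Set V :=
  {v, x, y} ∪ Set.range p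

/-- The vertex set of a `W_{a,b}`-configuration with paths `p, q`, centre `v` and
connectors `x, y`. -/
def wabVerts {V : Type} {n m : ℕ} (p : Fin (n + 1) → V) (q : Fin (m + 1) → V)
    (v x y : V) : Set V :=
  {v, x, y} ∪ Set.range p ∪ Set.range q

/-- A `W_a`-configuration in `G` (here the path `p` has `n + 1` vertices, so `a = n + 1`):
an induced subgraph consisting of a path `p 0, …, p n` and three further distinct vertices
`v, x, y` not on the path, such that `v` is adjacent to all vertices of the path and to `x`
and `y`, with edges `x–p 0` and `y–p n`; every vertex of the configuration other than `v`
has degree 3 in `G`; `G` minus the vertices of the configuration is connected; both `x` and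
`y` have precisely one neighbour outside the configuration, and no other vertex of the
configuration has a neighbour outside it. `v` is the centre, `x, y` are the connectors. -/
def IsWaConfig {V : Type} [Fintype V] (G : SimpleGraph V) (n : ℕ)
    (p : Fin (n + 1) → V) (v x y : V) : Prop :=
  Function.Injective p ∧
  v ∉ Set.range p ∧ x ∉ Set.range p ∧ y ∉ Set.range p ∧
  v ≠ x ∧ v ≠ y ∧ x ≠ y ∧
  (∀ i : Fin n, G.Adj (p i.castSucc) (p i.succ)) ∧
  (∀ i, G.Adj v (p i)) ∧ G.Adj v x ∧ G.Adj v y ∧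
  G.Adj x (p 0) ∧ G.Adj y (p (Fin.last n)) ∧
  (∀ z ∈ waVerts p v x y, z ≠ v → gdeg G z = 3) ∧
  (G.induce (waVerts p v x y)ᶜ).Connected ∧
  (∃! w, w ∉ waVerts p v x y ∧ G.Adj x w) ∧
  (∃! w, w ∉ waVerts p v x y ∧ G.Adj y w) ∧
  (∀ z ∈ waVerts p v x y, z ≠ x → z ≠ y →
    ∀ w, w ∉ waVerts p v x y → ¬G.Adj z w)

/-- A `W_{a,b}`-configuration in `G` (the paths `p` and `q` have `n + 1` and `m + 1`
vertices respectively, so `a = n + 1`, `b = m + 1`): an induced subgraph consisting of two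
disjoint paths `p 0, …, p n` and `q 0, …, q m` and three further distinct vertices
`v, x, y` not on the paths, such that `v` is adjacent to all vertices of both paths, with
edges `x–p 0`, `x–q 0`, `y–p n` and `y–q m`; every vertex of the configuration other than
`v` has degree 3 in `G`; `G` minus the vertices of the configuration is connected; both `x`
and `y` have precisely one neighbour outside the configuration, and no other vertex of the
configuration has a neighbour outside it. `v` is the centre, `x, y` are the connectors. -/
def IsWabConfig {V : Type} [Fintype V] (G : SimpleGraph V) (n m : ℕ)
    (p : Fin (n + 1) → V) (q : Fin (m + 1) → V) (v x y : V) : Prop :=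
  Function.Injective p ∧ Function.Injective q ∧
  Disjoint (Set.range p) (Set.range q) ∧
  v ∉ Set.range p ∧ x ∉ Set.range p ∧ y ∉ Set.range p ∧
  v ∉ Set.range q ∧ x ∉ Set.range q ∧ y ∉ Set.range q ∧
  v ≠ x ∧ v ≠ y ∧ x ≠ y ∧
  (∀ i : Fin n, G.Adj (p i.castSucc) (p i.succ)) ∧
  (∀ i : Fin m, G.Adj (q i.castSucc) (q i.succ)) ∧
  (∀ i, G.Adj v (p i)) ∧ (∀ i, G.Adj v (q i)) ∧
  G.Adj x (p 0) ∧ G.Adj x (q 0) ∧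
  G.Adj y (p (Fin.last n)) ∧ G.Adj y (q (Fin.last m)) ∧
  (∀ z ∈ wabVerts p q v x y, z ≠ v → gdeg G z = 3) ∧
  (G.induce (wabVerts p q v x y)ᶜ).Connected ∧
  (∃! w, w ∉ wabVerts p q v x y ∧ G.Adj x w) ∧
  (∃! w, w ∉ wabVerts p q v x y ∧ G.Adj y w) ∧
  (∀ z ∈ wabVerts p q v x y, z ≠ x → z ≠ y →
    ∀ w, w ∉ wabVerts p q v x y → ¬G.Adj z w)

/-- A subgraph `T` of `G` (on the same vertex set) is `G`-good if it contains no path of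
length 2 all of whose three vertices have degree at least 3 in `G` and degree 2 in `T`. -/
def GoodSubgraph {W : Type} (G T : SimpleGraph W) : Prop :=
  ¬∃ a b c : W, a ≠ c ∧ T.Adj a b ∧ T.Adj b c ∧
    gdeg T a = 2 ∧ gdeg T b = 2 ∧ gdeg T c = 2 ∧
    3 ≤ gdeg G a ∧ 3 ≤ gdeg G b ∧ 3 ≤ gdeg G c

/-!
Let `S = V(H) \ {x, y}` and let `T'` be a good spanning tree of `G' = G - S`. Hang every removed
vertex from a parent: in a `W_a`-configuration `v` and `p 0` hang from `x` and the other path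
vertices from `v`; in a `W_{a,b}`-configuration `p 0` and `q 0` hang from `x`, `v` from `p 0` and
the other path vertices from `v`. Adding these edges to `T'` gives a connected graph with
`|V| - 1` edges, i.e. a spanning tree `T` of `G`.

The connector `x` gets two children, so its degree in `T` is at least 3. Every other vertex of
`G'` keeps its degree from `T'`, and its degree in `G'` is its degree in `G`, except for `y`,
whose degree in `G'` is at most 1; so a bad path of `T` inside `G'` is already bad in `T'`. A bad
path through a removed vertex `b` needs a removed grandchild of `b` and a removed parent of `b`
(not `x`, whose degree is at least 3): four generations of removed vertices, while the hanging
forest has depth at most 3 below `x`.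
-/

lemma gdeg_eq_ncard {V : Type} (H : SimpleGraph V) (v : V) :
    gdeg H v = (H.neighborSet v).ncard :=
  Nat.card_coe_set_eq _

lemma gdeg_mono {V : Type} [Finite V] {H H' : SimpleGraph V} (h : H ≤ H') (v : V) :
    gdeg H v ≤ gdeg H' v := by
  rw [gdeg_eq_ncard, gdeg_eq_ncard]
  exact Set.ncard_le_ncard fun _ hw => h hw

lemma gdeg_induce {V : Type} (G : SimpleGraph V) (s : Set V) (v : s) :
    gdeg (G.induce s) v = (G.neighborSet v ∩ s).ncard := by
  rw [gdeg_eq_ncard, ← Set.ncard_image_of_injective _ Subtype.val_injective]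
  congr 1
  ext w
  exact ⟨by rintro ⟨w, hw, rfl⟩; exact ⟨hw, w.2⟩, fun hw => ⟨⟨w, hw.2⟩, hw.1, rfl⟩⟩

def attachByParents {V : Type} (S : Set V) (T' : SimpleGraph ↥Sᶜ) (f : V → V) :
    SimpleGraph V :=
  T'.map (Function.Embedding.subtype _) ⊔ fromRel fun a b => a ∈ S ∧ f a = b

section AttachByParents

variable {V : Type} {S : Set V} {T' : SimpleGraph ↥Sᶜ} {f : V → V} {r : V → ℕ}

lemma attachByParents_adj_parent {a : V} (ha : a ∈ S) (hfa : f a ≠ a) :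
    (attachByParents S T' f).Adj a (f a) :=
  Or.inr ⟨hfa.symm, Or.inl ⟨ha, rfl⟩⟩

lemma attachByParents_adj_of_adj {a b : ↥Sᶜ} (h : T'.Adj a b) :
    (attachByParents S T' f).Adj a b :=
  Or.inl ⟨fun hab => h.ne (Subtype.ext hab), a, b, h, rfl, rfl⟩

lemma attachByParents_le {G : SimpleGraph V} (hT' : T' ≤ G.induce Sᶜ)
    (hf : ∀ a ∈ S, G.Adj a (f a)) : attachByParents S T' f ≤ G := by
  rintro a b (⟨-, a, b, h, rfl, rfl⟩ | ⟨-, ⟨ha, rfl⟩ | ⟨hb, rfl⟩⟩)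
  exacts [hT' h, hf a ha, (hf b hb).symm]

lemma neighborSet_attachByParents_of_notMem {z : V} (hz : z ∉ S) :
    (attachByParents S T' f).neighborSet z =
      Subtype.val '' T'.neighborSet ⟨z, hz⟩ ∪ {a | a ∈ S ∧ f a = z} := by
  ext w
  simp only [attachByParents, mem_neighborSet, sup_adj, map_adj', fromRel_adj,
    Function.Embedding.coe_subtype, Set.mem_union, Set.mem_image, Set.mem_ofPred_eq]
  constructor
  · rintro (⟨-, a, b, h, rfl, rfl⟩ | ⟨-, ⟨hz', -⟩ | hw⟩)
    · exact Or.inl ⟨b, h, rfl⟩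
    · exact absurd hz' hz
    · exact Or.inr hw
  · rintro (⟨b, h, rfl⟩ | hw)
    · exact Or.inl ⟨fun h' => h.ne (Subtype.ext h'), ⟨z, hz⟩, b, h, rfl, rfl⟩
    · exact Or.inr ⟨fun h => hz (h ▸ hw.1), Or.inr hw⟩

lemma neighborSet_attachByParents_of_mem {b : V} (hb : b ∈ S) (hfb : f b ≠ b) :
    (attachByParents S T' f).neighborSet b = insert (f b) {a | a ∈ S ∧ f a = b} := by
  ext w
  simp only [attachByParents, mem_neighborSet, sup_adj, map_adj', fromRel_adj,
    Function.Embedding.coe_subtype, Set.mem_insert_iff, Set.mem_ofPred_eq]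
  constructor
  · rintro (⟨-, a, -, -, rfl, -⟩ | ⟨-, ⟨-, rfl⟩ | hw⟩)
    · exact absurd hb a.2
    · exact Or.inl rfl
    · exact Or.inr hw
  · rintro (rfl | hw)
    · exact Or.inr ⟨hfb.symm, Or.inl ⟨hb, rfl⟩⟩
    · exact Or.inr ⟨fun h => hfb (h ▸ hw.2), Or.inr hw⟩

lemma parent_ne_of_rank_lt (hr : ∀ a ∈ S, r (f a) < r a) {a : V} (ha : a ∈ S) : f a ≠ a :=
  fun h => (hr a ha).ne (congrArg r h)

lemma exists_reachable_notMem_attachByParents (hr : ∀ a ∈ S, r (f a) < r a) (a : V) :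
    ∃ k ∉ S, (attachByParents S T' f).Reachable a k := by
  induction hn : r a using Nat.strong_induction_on generalizing a with
  | _ n ih =>
    by_cases ha : a ∈ S
    · obtain ⟨k, hk, hreach⟩ := ih _ (hn ▸ hr a ha) (f a) rfl
      exact ⟨k, hk,
        (attachByParents_adj_parent ha (parent_ne_of_rank_lt hr ha)).reachable.trans hreach⟩
    · exact ⟨a, ha, .rfl⟩

lemma attachByParents_connected (hT' : T'.Connected) (hr : ∀ a ∈ S, r (f a) < r a) :
    (attachByParents S T' f).Connected := by
  have : Nonempty V := ⟨(hT'.nonempty.some : V)⟩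
  refine Connected.mk fun a b => ?_
  obtain ⟨k, hk, hak⟩ := exists_reachable_notMem_attachByParents (T' := T') hr a
  obtain ⟨l, hl, hbl⟩ := exists_reachable_notMem_attachByParents (T' := T') hr b
  have hkl : (attachByParents S T' f).Reachable k l :=
    (hT'.preconnected ⟨k, hk⟩ ⟨l, hl⟩).map ⟨Subtype.val, attachByParents_adj_of_adj⟩
  exact hak.trans (hkl.trans hbl.symm)

lemma edgeSet_attachByParents (hr : ∀ a ∈ S, r (f a) < r a) :
    (attachByParents S T' f).edgeSet =
      (Function.Embedding.subtype _).sym2Map '' T'.edgeSet ∪ (fun a => s(a, f a)) '' S := by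
  rw [attachByParents, edgeSet_sup, edgeSet_map]
  congr 1
  ext e
  induction e with
  | _ a b =>
    simp only [mem_edgeSet, fromRel_adj, Set.mem_image, Sym2.eq_iff]
    constructor
    · rintro ⟨-, ⟨ha, rfl⟩ | ⟨hb, rfl⟩⟩
      · exact ⟨a, ha, Or.inl ⟨rfl, rfl⟩⟩
      · exact ⟨b, hb, Or.inr ⟨rfl, rfl⟩⟩
    · rintro ⟨c, hc, ⟨rfl, rfl⟩ | ⟨rfl, rfl⟩⟩
      · exact ⟨(parent_ne_of_rank_lt hr hc).symm, Or.inl ⟨hc, rfl⟩⟩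
      · exact ⟨parent_ne_of_rank_lt hr hc, Or.inr ⟨hc, rfl⟩⟩

lemma ncard_edgeSet_attachByParents [Finite V] (hr : ∀ a ∈ S, r (f a) < r a) :
    (attachByParents S T' f).edgeSet.ncard = T'.edgeSet.ncard + S.ncard := by
  have hdisj : Disjoint ((Function.Embedding.subtype _).sym2Map '' T'.edgeSet)
      ((fun a => s(a, f a)) '' S) := by
    simp only [Set.disjoint_left, Set.mem_image, not_exists, not_and]
    rintro _ ⟨e, -, rfl⟩ a ha hae
    induction e with
    | _ b c =>
      simp only [Function.Embedding.sym2Map_apply, Function.Embedding.coe_subtype,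
        Sym2.map_mk, Sym2.eq_iff] at hae
      rcases hae with ⟨rfl, -⟩ | ⟨rfl, -⟩
      exacts [b.2 ha, c.2 ha]
  have hinj : Set.InjOn (fun a => s(a, f a)) S := by
    intro a ha b hb hab
    rcases Sym2.eq_iff.1 hab with ⟨h, -⟩ | ⟨h₁, rfl⟩
    · exact h
    · have h₂ := hr _ hb
      rw [← h₁] at h₂
      exact absurd (hr a ha) h₂.asymm
  rw [edgeSet_attachByParents hr, Set.ncard_union_eq hdisj,
    Set.ncard_image_of_injective _ (Function.Embedding.sym2Map _).injective, hinj.ncard_image]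

lemma attachByParents_isTree [Finite V] (hT' : T'.IsTree) (hr : ∀ a ∈ S, r (f a) < r a) :
    (attachByParents S T' f).IsTree := by
  rw [isTree_iff_connected_and_card] at hT' ⊢
  refine ⟨attachByParents_connected hT'.1 hr, ?_⟩
  rw [Nat.card_coe_set_eq, ncard_edgeSet_attachByParents hr, ← Set.ncard_add_ncard_compl S,
    ← Nat.card_coe_set_eq Sᶜ, ← hT'.2, Nat.card_coe_set_eq]
  ring

lemma gdeg_attachByParents_of_notMem [Finite V] {z : V} (hz : z ∉ S) :
    gdeg (attachByParents S T' f) z = gdeg T' ⟨z, hz⟩ + {a | a ∈ S ∧ f a = z}.ncard := by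
  have hdisj : Disjoint (Subtype.val '' T'.neighborSet ⟨z, hz⟩) {a | a ∈ S ∧ f a = z} :=
    Set.disjoint_left.2 fun _ ⟨w, _, hw⟩ ha => w.2 (hw ▸ ha.1)
  rw [gdeg_eq_ncard, neighborSet_attachByParents_of_notMem hz, Set.ncard_union_eq hdisj,
    Set.ncard_image_of_injective _ Subtype.val_injective, gdeg_eq_ncard]

lemma gdeg_attachByParents_of_mem [Finite V] (hr : ∀ a ∈ S, r (f a) < r a) {b : V}
    (hb : b ∈ S) : gdeg (attachByParents S T' f) b = {a | a ∈ S ∧ f a = b}.ncard + 1 := by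
  have hfb : f b ∉ {a | a ∈ S ∧ f a = b} := fun ⟨h, hffb⟩ => by
    have h₂ := hr _ h
    rw [hffb] at h₂
    exact absurd (hr b hb) h₂.asymm
  rw [gdeg_eq_ncard, neighborSet_attachByParents_of_mem hb (parent_ne_of_rank_lt hr hb),
    Set.ncard_insert_of_notMem hfb]

lemma three_le_gdeg_attachByParents [Finite V] (hT' : T'.Connected) {x y z₁ z₂ : V}
    (hx : x ∉ S) (hy : y ∉ S) (hxy : x ≠ y) (hz₁ : z₁ ∈ S) (hz₂ : z₂ ∈ S) (hz : z₁ ≠ z₂)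
    (hfz₁ : f z₁ = x) (hfz₂ : f z₂ = x) :
    3 ≤ gdeg (attachByParents S T' f) x := by
  have : Nontrivial ↥Sᶜ := ⟨⟨x, hx⟩, ⟨y, hy⟩, fun h => hxy (congrArg Subtype.val h)⟩
  obtain ⟨k, hk⟩ := hT'.preconnected.exists_adj_of_nontrivial ⟨x, hx⟩
  have hdeg : 1 ≤ gdeg T' ⟨x, hx⟩ := by
    rw [gdeg_eq_ncard]
    exact (Set.ncard_pos).2 ⟨k, hk⟩
  have hchildren : 2 ≤ {a | a ∈ S ∧ f a = x}.ncard := by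
    rw [← Set.ncard_pair hz]
    exact Set.ncard_le_ncard (by rintro _ (rfl | rfl) <;> simp_all)
  rw [gdeg_attachByParents_of_notMem hx]
  omega

lemma setOf_parent_eq_eq_empty {x z : V} (hfx : ∀ a ∈ S, f a ∉ S → f a = x) (hz : z ∉ S)
    (hzx : z ≠ x) : {a | a ∈ S ∧ f a = z} = ∅ :=
  Set.eq_empty_of_forall_notMem fun a ha => hzx (ha.2 ▸ hfx a ha.1 (ha.2 ▸ hz))

lemma gdeg_attachByParents_of_notMem_of_ne [Finite V] {x z : V}
    (hfx : ∀ a ∈ S, f a ∉ S → f a = x) (hz : z ∉ S) (hzx : z ≠ x) :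
    gdeg (attachByParents S T' f) z = gdeg T' ⟨z, hz⟩ := by
  rw [gdeg_attachByParents_of_notMem hz, setOf_parent_eq_eq_empty hfx hz hzx, Set.ncard_empty,
    add_zero]

lemma gdeg_attachByParents_ne_two_of_mem [Finite V] {x b : V} (hr : ∀ a ∈ S, r (f a) < r a)
    (hr3 : ∀ a ∈ S, r a ≤ 3) (hfx : ∀ a ∈ S, f a ∉ S → f a = x)
    (hx : 3 ≤ gdeg (attachByParents S T' f) x) (hb : b ∈ S)
    (hN : ∀ w ∈ (attachByParents S T' f).neighborSet b, gdeg (attachByParents S T' f) w = 2) :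
    gdeg (attachByParents S T' f) b ≠ 2 := by
  intro hdb
  have hchild : ∀ z ∈ S, gdeg (attachByParents S T' f) z = 2 → ∃ w ∈ S, f w = z :=
    fun z hz hdz => Set.nonempty_of_ncard_ne_zero (s := {a | a ∈ S ∧ f a = z})
      (by rw [gdeg_attachByParents_of_mem hr hz] at hdz; omega)
  obtain ⟨z, hz, hfz⟩ := hchild b hb hdb
  have hzN : z ∈ (attachByParents S T' f).neighborSet b := by
    rw [neighborSet_attachByParents_of_mem hb (parent_ne_of_rank_lt hr hb)]
    exact Or.inr ⟨hz, hfz⟩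
  obtain ⟨w, hw, hfw⟩ := hchild z hz (hN z hzN)
  have hfb : f b ∈ S := by_contra fun h => by
    have := hN _ (attachByParents_adj_parent hb (parent_ne_of_rank_lt hr hb))
    rw [hfx b hb h] at this
    omega
  -- the ranks strictly decrease along `w, z, b, f b, f (f b)`, starting from `r w ≤ 3`
  have := hr w hw
  have := hr z hz
  have := hr b hb
  have := hr _ hfb
  have := hr3 w hw
  subst hfw hfz
  omega

lemma attachByParents_good [Finite V] {G : SimpleGraph V} {x : V}
    (hT'le : T' ≤ G.induce Sᶜ) (hT'good : GoodSubgraph (G.induce Sᶜ) T')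
    (hr : ∀ a ∈ S, r (f a) < r a) (hr3 : ∀ a ∈ S, r a ≤ 3)
    (hfx : ∀ a ∈ S, f a ∉ S → f a = x) (hx : 3 ≤ gdeg (attachByParents S T' f) x)
    (hdeg : ∀ z (hz : z ∈ Sᶜ), z ≠ x →
      gdeg (G.induce Sᶜ) ⟨z, hz⟩ = gdeg G z ∨ gdeg (G.induce Sᶜ) ⟨z, hz⟩ ≤ 1) :
    GoodSubgraph G (attachByParents S T' f) := by
  set T := attachByParents S T' f
  rintro ⟨a, b, c, hac, hab, hbc, hda, hdb, hdc, hGa, hGb, hGc⟩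
  have hne : ∀ w, gdeg T w = 2 → w ≠ x := fun w hw hwx => by rw [hwx] at hw; omega
  by_cases hb : b ∈ S
  · refine gdeg_attachByParents_ne_two_of_mem hr hr3 hfx hx hb ?_ hdb
    have hsub : {a, c} ⊆ T.neighborSet b := by rintro _ (rfl | rfl); exacts [hab.symm, hbc]
    rw [← Set.eq_of_subset_of_ncard_le hsub (by rw [Set.ncard_pair hac, ← gdeg_eq_ncard, hdb])]
    rintro _ (rfl | rfl) <;> assumption
  · have hNb : T.neighborSet b = Subtype.val '' T'.neighborSet ⟨b, hb⟩ := by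
      rw [neighborSet_attachByParents_of_notMem hb, setOf_parent_eq_eq_empty hfx hb (hne b hdb),
        Set.union_empty]
    obtain ⟨a', ha', rfl⟩ : a ∈ Subtype.val '' T'.neighborSet ⟨b, hb⟩ := hNb ▸ hab.symm
    obtain ⟨c', hc', rfl⟩ : c ∈ Subtype.val '' T'.neighborSet ⟨b, hb⟩ := hNb ▸ hbc
    have hdeg' : ∀ w (hw : w ∈ Sᶜ), gdeg T w = 2 → gdeg T' ⟨w, hw⟩ = 2 := fun w hw hw2 =>
      gdeg_attachByParents_of_notMem_of_ne hfx hw (hne w hw2) ▸ hw2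
    have hG' : ∀ w (hw : w ∈ Sᶜ), gdeg T w = 2 → 3 ≤ gdeg G w →
        3 ≤ gdeg (G.induce Sᶜ) ⟨w, hw⟩ := fun w hw hw2 hGw => by
      have := gdeg_mono hT'le ⟨w, hw⟩
      have := hdeg' w hw hw2
      rcases hdeg w hw (hne w hw2) with h | h <;> omega
    exact hT'good ⟨a', ⟨b, hb⟩, c', fun h => hac (congrArg Subtype.val h), ha'.symm, hc',
      hdeg' a' a'.2 hda, hdeg' b hb hdb, hdeg' c' c'.2 hdc, hG' a' a'.2 hda hGa,
      hG' b hb hdb hGb, hG' c' c'.2 hdc hGc⟩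

end AttachByParents

theorem exists_good_spanning_tree_of_parents {V : Type} [Finite V] {G : SimpleGraph V}
    {S : Set V} {x y : V} (hx : x ∉ S) (hy : y ∉ S) (hxy : x ≠ y)
    {T' : SimpleGraph ↥Sᶜ} (hT'le : T' ≤ G.induce Sᶜ) (hT' : T'.IsTree)
    (hT'good : GoodSubgraph (G.induce Sᶜ) T')
    (f : V → V) (r : V → ℕ) (hf : ∀ a ∈ S, G.Adj a (f a)) (hfx : ∀ a ∈ S, f a ∉ S → f a = x)
    (hr : ∀ a ∈ S, r (f a) < r a) (hr3 : ∀ a ∈ S, r a ≤ 3)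
    {z₁ z₂ : V} (hz₁ : z₁ ∈ S) (hz₂ : z₂ ∈ S) (hz : z₁ ≠ z₂) (hfz₁ : f z₁ = x) (hfz₂ : f z₂ = x)
    (hdeg : ∀ z (hz : z ∈ Sᶜ), z ≠ x →
      gdeg (G.induce Sᶜ) ⟨z, hz⟩ = gdeg G z ∨ gdeg (G.induce Sᶜ) ⟨z, hz⟩ ≤ 1) :
    ∃ T : SimpleGraph V, T ≤ G ∧ T.IsTree ∧ GoodSubgraph G T :=
  ⟨attachByParents S T' f, attachByParents_le hT'le hf, attachByParents_isTree hT' hr,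
    attachByParents_good hT'le hT'good hr hr3 hfx
      (three_le_gdeg_attachByParents hT'.connected hx hy hxy hz₁ hz₂ hz hfz₁ hfz₂) hdeg⟩

lemma gdeg_induce_compl_diff_eq_or_le_one {V : Type} {G : SimpleGraph V} {Hs : Set V}
    {x y n₁ n₂ z : V} (hy : gdeg G y = 3) (hn : n₁ ≠ n₂) (hn₁ : n₁ ∈ Hs \ {x, y})
    (hn₂ : n₂ ∈ Hs \ {x, y}) (hyn₁ : G.Adj y n₁) (hyn₂ : G.Adj y n₂)
    (hHs : ∀ z ∈ Hs, z ≠ x → z ≠ y → ∀ w, w ∉ Hs → ¬G.Adj z w)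
    (hz : z ∈ (Hs \ {x, y})ᶜ) (hzx : z ≠ x) :
    gdeg (G.induce (Hs \ {x, y})ᶜ) ⟨z, hz⟩ = gdeg G z ∨
      gdeg (G.induce (Hs \ {x, y})ᶜ) ⟨z, hz⟩ ≤ 1 := by
  rw [gdeg_induce]
  by_cases hzHs : z ∈ Hs
  · obtain rfl : z = y := by by_contra h; exact hz ⟨hzHs, by simp [hzx, h]⟩
    right
    have hfin : (G.neighborSet z).Finite :=
      Set.finite_of_ncard_ne_zero (by rw [← gdeg_eq_ncard, hy]; omega)
    have hsub : G.neighborSet z ∩ (Hs \ {x, z})ᶜ ⊆ G.neighborSet z \ {n₁, n₂} := by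
      rintro w ⟨hw, hwS⟩
      refine ⟨hw, ?_⟩
      rintro (rfl | rfl)
      exacts [hwS hn₁, hwS hn₂]
    have hpair : {n₁, n₂} ⊆ G.neighborSet z := by rintro _ (rfl | rfl) <;> assumption
    calc _ ≤ (G.neighborSet z \ {n₁, n₂}).ncard := Set.ncard_le_ncard hsub hfin.sdiff
      _ = 1 := by rw [Set.ncard_sdiff hpair, Set.ncard_pair hn, ← gdeg_eq_ncard, hy]
  · left
    rw [gdeg_eq_ncard]
    congr 1
    refine Set.inter_eq_left.2 ?_
    rintro w hw ⟨hwHs, hwxy⟩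
    simp only [Set.mem_insert_iff, Set.mem_singleton_iff, not_or] at hwxy
    exact hHs w hwHs hwxy.1 hwxy.2 z hzHs hw.symm

section Configurations

variable {V : Type} [Fintype V] {G : SimpleGraph V} {v x y : V}

lemma IsWaConfig.mem_diff_iff {n : ℕ} {p : Fin (n + 1) → V} (h : IsWaConfig G n p v x y)
    {a : V} : a ∈ waVerts p v x y \ {x, y} ↔ a = v ∨ ∃ i, p i = a := by
  obtain ⟨-, hvp, hxp, hyp, hvx, hvy, -⟩ := h
  simp only [waVerts, Set.mem_sdiff, Set.mem_union, Set.mem_insert_iff, Set.mem_singleton_iff,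
    Set.mem_range] at *
  grind

lemma IsWabConfig.mem_diff_iff {n m : ℕ} {p : Fin (n + 1) → V} {q : Fin (m + 1) → V}
    (h : IsWabConfig G n m p q v x y) {a : V} :
    a ∈ wabVerts p q v x y \ {x, y} ↔ a = v ∨ (∃ i, p i = a) ∨ ∃ j, q j = a := by
  obtain ⟨-, -, -, hvp, hxp, hyp, hvq, hxq, hyq, hvx, hvy, -⟩ := h
  simp only [wabVerts, Set.mem_sdiff, Set.mem_union, Set.mem_insert_iff, Set.mem_singleton_iff,
    Set.mem_range] at *
  grind

theorem IsWaConfig.exists_good_spanning_tree {n : ℕ} {p : Fin (n + 1) → V}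
    (h : IsWaConfig G n p v x y) {T' : SimpleGraph ↥(waVerts p v x y \ {x, y})ᶜ}
    (hT'le : T' ≤ G.induce (waVerts p v x y \ {x, y})ᶜ) (hT' : T'.IsTree)
    (hT'good : GoodSubgraph (G.induce (waVerts p v x y \ {x, y})ᶜ) T') :
    ∃ T : SimpleGraph V, T ≤ G ∧ T.IsTree ∧ GoodSubgraph G T := by
  classical
  have hS := @h.mem_diff_iff
  obtain ⟨hp, hvp, hxp, hyp, hvx, hvy, hxy, -, hGvp, hGvx, hGvy, hGxp, hGyp, hdeg3, -, -, -,
    hHs⟩ := h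
  simp only [Set.mem_range, not_exists] at hvp hxp hyp
  have hp0 : ∀ i, p i = p 0 ↔ i = 0 := fun i => hp.eq_iff
  refine exists_good_spanning_tree_of_parents (x := x) (y := y) (by simp [hS, hvx.symm, hxp])
    (by simp [hS, hvy.symm, hyp]) hxy hT'le hT' hT'good
    (fun a => if a = v ∨ a = p 0 then x else v)
    (fun a => if a = x then 0 else if a = v ∨ a = p 0 then 1 else 2) ?_ ?_ ?_ ?_
    (z₁ := v) (z₂ := p 0) (hS.2 (.inl rfl)) (hS.2 (.inr ⟨0, rfl⟩)) (Ne.symm (hvp 0))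
    (by simp) (by simp) ?_
  · simp only [hS]
    rintro _ (rfl | ⟨i, rfl⟩)
    · simpa using hGvx
    · by_cases hi : i = 0
      · subst hi; simpa using hGxp.symm
      · simpa [hvp, hp0, hi] using (hGvp i).symm
  · intro a _ h
    split_ifs at h ⊢
    · rfl
    · exact absurd (hS.2 (.inl rfl)) h
  · simp only [hS]
    rintro _ (rfl | ⟨i, rfl⟩)
    · simp [hvx]
    · by_cases hi : i = 0
      · subst hi; simp [hxp]
      · simp [hvp, hp0, hi, hxp, hvx]
  · intro a _
    split_ifs <;> omega
  · exact fun z hz hzx => gdeg_induce_compl_diff_eq_or_le_one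
      (hdeg3 y (by simp [waVerts]) hvy.symm) (Ne.symm (hvp _)) (hS.2 (.inl rfl))
      (hS.2 (.inr ⟨_, rfl⟩)) hGvy.symm hGyp hHs hz hzx

theorem IsWabConfig.exists_good_spanning_tree {n m : ℕ} {p : Fin (n + 1) → V}
    {q : Fin (m + 1) → V} (h : IsWabConfig G n m p q v x y)
    {T' : SimpleGraph ↥(wabVerts p q v x y \ {x, y})ᶜ}
    (hT'le : T' ≤ G.induce (wabVerts p q v x y \ {x, y})ᶜ) (hT' : T'.IsTree)
    (hT'good : GoodSubgraph (G.induce (wabVerts p q v x y \ {x, y})ᶜ) T') :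
    ∃ T : SimpleGraph V, T ≤ G ∧ T.IsTree ∧ GoodSubgraph G T := by
  classical
  have hS := @h.mem_diff_iff
  obtain ⟨hp, hq, hpq, hvp, hxp, hyp, hvq, hxq, hyq, hvx, hvy, hxy, -, -, hGvp, hGvq, hGxp, hGxq,
    hGyp, hGyq, hdeg3, -, -, -, hHs⟩ := h
  simp only [Set.mem_range, not_exists] at hvp hxp hyp hvq hxq hyq
  have hpq : ∀ i j, p i ≠ q j := fun i j h => Set.disjoint_left.1 hpq ⟨i, rfl⟩ ⟨j, h.symm⟩
  have hp0 : ∀ i, p i = p 0 ↔ i = 0 := fun i => hp.eq_iff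
  have hq0 : ∀ j, q j = q 0 ↔ j = 0 := fun j => hq.eq_iff
  refine exists_good_spanning_tree_of_parents (x := x) (y := y) (by simp [hS, hvx.symm, hxp, hxq])
    (by simp [hS, hvy.symm, hyp, hyq]) hxy hT'le hT' hT'good
    (fun a => if a = p 0 ∨ a = q 0 then x else if a = v then p 0 else v)
    (fun a => if a = x then 0 else if a = p 0 ∨ a = q 0 then 1 else if a = v then 2 else 3)
    ?_ ?_ ?_ ?_ (z₁ := p 0) (z₂ := q 0) (hS.2 (.inr (.inl ⟨0, rfl⟩)))
    (hS.2 (.inr (.inr ⟨0, rfl⟩))) (hpq 0 0) (by simp) (by simp) ?_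
  · simp only [hS]
    rintro _ (rfl | ⟨i, rfl⟩ | ⟨j, rfl⟩)
    · simpa [Ne.symm (hvp 0), Ne.symm (hvq 0)] using hGvp 0
    · by_cases hi : i = 0
      · subst hi; simpa using hGxp.symm
      · simpa [hvp, hp0, hi, hpq] using (hGvp i).symm
    · by_cases hj : j = 0
      · subst hj; simpa using hGxq.symm
      · simpa [hvq, hq0, hj, Ne.symm (hpq _ _)] using (hGvq j).symm
  · intro a _ h
    split_ifs at h ⊢
    · rfl
    · exact absurd (hS.2 (.inr (.inl ⟨0, rfl⟩))) h
    · exact absurd (hS.2 (.inl rfl)) h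
  · simp only [hS]
    rintro _ (rfl | ⟨i, rfl⟩ | ⟨j, rfl⟩)
    · simp [hvx, Ne.symm (hvp 0), Ne.symm (hvq 0), hxp]
    · by_cases hi : i = 0
      · subst hi; simp [hxp]
      · simp [hvp, hp0, hi, hxp, hvx, hpq, Ne.symm (hvp 0), Ne.symm (hvq 0)]
    · by_cases hj : j = 0
      · subst hj; simp [hxq]
      · simp [hvq, hq0, hj, hxq, hvx, Ne.symm (hpq _ _), Ne.symm (hvp 0), Ne.symm (hvq 0)]
  · intro a _
    split_ifs <;> omega
  · exact fun z hz hzx => gdeg_induce_compl_diff_eq_or_le_one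
      (hdeg3 y (by simp [wabVerts]) hvy.symm) (hpq _ _) (hS.2 (.inr (.inl ⟨_, rfl⟩)))
      (hS.2 (.inr (.inr ⟨_, rfl⟩))) hGyp hGyq hHs hz hzx

end Configurations

theorem stmt_15 (V : Type) [Fintype V] (G : SimpleGraph V)
    (v x y : V) (Hs : Set V)
    (hH : (∃ (n : ℕ) (p : Fin (n + 1) → V),
            IsWaConfig G n p v x y ∧ Hs = waVerts p v x y) ∨
          (∃ (n m : ℕ) (p : Fin (n + 1) → V) (q : Fin (m + 1) → V),
            IsWabConfig G n m p q v x y ∧ Hs = wabVerts p q v x y))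
    (hG' : ∃ T : SimpleGraph ↥(Hs \ {x, y} : Set V)ᶜ,
            T ≤ G.induce (Hs \ {x, y} : Set V)ᶜ ∧ T.IsTree ∧
            GoodSubgraph (G.induce (Hs \ {x, y} : Set V)ᶜ) T) :
    ∃ T : SimpleGraph V, T ≤ G ∧ T.IsTree ∧ GoodSubgraph G T := by
  obtain ⟨T', hT'le, hT', hT'good⟩ := hG'
  rcases hH with ⟨n, p, h, rfl⟩ | ⟨n, m, p, q, h, rfl⟩
  exacts [h.exists_good_spanning_tree hT'le hT' hT'good,
    h.exists_good_spanning_tree hT'le hT' hT'good]
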